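/- Let (v_i)_{i=1}^{d_V} be an orthonormal basis of ℝ^{d_V}, let λ : {1,…,d_V} → ℝ with 0 < η λ_i ≤ 1 for all i, let H_Valley = Σ_i λ_i v_i v_iᵀ and Φ = I − η H_Valley. Let H_RV ∈ ℝ^{d_R×d_V} with operator norm ‖H_RV‖ ≤ h̄ and let θ_{V,0} ∈ ℝ^{d_V} with ‖θ_{V,0}‖ ≤ ᾱ, where h̄, ᾱ > 0. Then for every K ≥ 0, the cumulative force generated by the valley dynamics on the river subspace satisfies ‖η Σ_{k=0}^{K−1} H_RV Φ^k θ_{V,0}‖ ≤ √(d_V) · h̄ · ᾱ · Σ_{i=1}^{d_V} 1/|λ_i|. -/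

import Mathlib

open Matrix

/-- The Euclidean norm of a vector in `ℝ^d`. -/
noncomputable def euclNorm {d : ℕ} (x : Fin d → ℝ) : ℝ := Real.sqrt (∑ i, x i ^ 2)

lemma euclNorm_eq_norm {d : ℕ} (x : Fin d → ℝ) :
    euclNorm x = ‖(WithLp.equiv 2 (Fin d → ℝ)).symm x‖ := by
  rw [EuclideanSpace.norm_eq]
  simp [euclNorm, sq_abs]

lemma euclNorm_smul {d : ℕ} (c : ℝ) (x : Fin d → ℝ) :
    euclNorm (c • x) = |c| * euclNorm x := by
  have : (WithLp.equiv 2 (Fin d → ℝ)).symm (c • x)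
      = c • (WithLp.equiv 2 (Fin d → ℝ)).symm x := rfl
  rw [euclNorm_eq_norm, euclNorm_eq_norm, this, norm_smul, Real.norm_eq_abs]

lemma euclNorm_sum_le {d : ℕ} {ι : Type*} (s : Finset ι) (f : ι → Fin d → ℝ) :
    euclNorm (∑ i ∈ s, f i) ≤ ∑ i ∈ s, euclNorm (f i) := by
  have : (WithLp.equiv 2 (Fin d → ℝ)).symm (∑ i ∈ s, f i)
      = ∑ i ∈ s, (WithLp.equiv 2 (Fin d → ℝ)).symm (f i) := by
    simp [WithLp.toLp_sum]
  rw [euclNorm_eq_norm, this]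
  refine (norm_sum_le _ _).trans_eq ?_
  simp [euclNorm_eq_norm]

/-- Theorem 1 (Cumulative Force under Quadratic Loss): with `H_Valley = Σ_i λ_i v_i v_iᵀ`
((v_i) orthonormal, `0 < η λ_i ≤ 1`), `Φ = I − η H_Valley`, `‖H_RV‖ ≤ h̄` (operator norm) and
`‖θ_{V,0}‖ ≤ ᾱ`, the cumulative force satisfies
`‖η Σ_{k=0}^{K−1} H_RV Φ^k θ_{V,0}‖ ≤ √d_V · h̄ · ᾱ · Σ_i 1/|λ_i|` for every `K`. -/
theorem cumulative_force_bound (dV dR : ℕ) (v : Fin dV → Fin dV → ℝ)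
    (hortho : ∀ i j, v i ⬝ᵥ v j = if i = j then (1 : ℝ) else 0)
    (lam : Fin dV → ℝ) (η : ℝ) (hetalam : ∀ i, 0 < η * lam i ∧ η * lam i ≤ 1)
    (HValley : Matrix (Fin dV) (Fin dV) ℝ)
    (hH : HValley = ∑ i, lam i • Matrix.vecMulVec (v i) (v i))
    (HRV : Matrix (Fin dR) (Fin dV) ℝ) (hbar αbar : ℝ) (hhbar : 0 < hbar) (hαbar : 0 < αbar)
    (hHRV : ∀ x : Fin dV → ℝ, euclNorm (HRV.mulVec x) ≤ hbar * euclNorm x)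
    (θV0 : Fin dV → ℝ) (hθ : euclNorm θV0 ≤ αbar) (K : ℕ) :
    euclNorm (η • ∑ k ∈ Finset.range K, HRV.mulVec (((1 - η • HValley) ^ k).mulVec θV0)) ≤
      Real.sqrt dV * hbar * αbar * ∑ i, 1 / |lam i| := by
  set Φ : Matrix (Fin dV) (Fin dV) ℝ := 1 - η • HValley with hΦ
  -- completeness: ∑ i, (v i ⬝ᵥ x) • v i = x
  have hcomplete : ∀ x : Fin dV → ℝ, ∑ i, (v i ⬝ᵥ x) • v i = x := by
    intro x
    set V : Matrix (Fin dV) (Fin dV) ℝ := Matrix.of v with hV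
    have h1 : V * Vᵀ = 1 := by
      ext i j
      simpa [hV, Matrix.mul_apply, Matrix.one_apply, dotProduct] using hortho i j
    have h2 : Vᵀ * V = 1 := mul_eq_one_comm.mp h1
    have h4 : ∑ i, (v i ⬝ᵥ x) • v i = Vᵀ *ᵥ (V *ᵥ x) := by
      ext j
      simp only [Finset.sum_apply, Pi.smul_apply, smul_eq_mul, Matrix.mulVec,
        dotProduct, Matrix.transpose_apply, hV, Matrix.of_apply, Finset.mul_sum,
        Finset.sum_mul]
      exact Finset.sum_congr rfl fun i _ => Finset.sum_congr rfl fun k _ => by ring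
    rw [h4, Matrix.mulVec_mulVec, h2, Matrix.one_mulVec]
  -- action of Φ on eigenvectors
  have hΦv : ∀ j, Φ.mulVec (v j) = (1 - η * lam j) • v j := by
    intro j
    have hHv : HValley.mulVec (v j) = lam j • v j := by
      ext a
      rw [hH]
      simp only [Matrix.mulVec, dotProduct, Matrix.sum_apply, Matrix.smul_apply,
        Matrix.vecMulVec_apply, smul_eq_mul, Pi.smul_apply, Finset.sum_mul]
      rw [Finset.sum_comm]
      have hterm : ∀ i, (∑ x, lam i * (v i a * v i x) * v j x)
          = lam i * v i a * (if i = j then (1:ℝ) else 0) := by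
        intro i
        rw [← hortho i j]
        simp only [dotProduct, Finset.mul_sum]
        exact Finset.sum_congr rfl fun x _ => by ring
      rw [Finset.sum_congr rfl fun i _ => hterm i]
      simp
    rw [hΦ, Matrix.sub_mulVec, Matrix.one_mulVec, Matrix.smul_mulVec, hHv,
      sub_smul, one_smul, smul_smul]
  -- powers
  have hpow : ∀ k, (Φ ^ k).mulVec θV0
      = ∑ i, ((1 - η * lam i) ^ k * (v i ⬝ᵥ θV0)) • v i := by
    intro k
    induction k with
    | zero => simp [Matrix.one_mulVec, hcomplete θV0]
    | succ n ih =>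
      rw [pow_succ', ← Matrix.mulVec_mulVec, ih]
      have hlin := map_sum (Matrix.mulVecLin Φ)
        (fun i => ((1 - η * lam i) ^ n * (v i ⬝ᵥ θV0)) • v i) Finset.univ
      simp only [Matrix.mulVecLin_apply] at hlin
      rw [hlin]
      refine Finset.sum_congr rfl fun i _ => ?_
      rw [Matrix.mulVec_smul, hΦv i, smul_smul]
      ring_nf
  -- rewrite the vector
  have mulVec_sumK : HRV *ᵥ (∑ k ∈ Finset.range K, (Φ ^ k) *ᵥ θV0)
      = ∑ k ∈ Finset.range K, HRV *ᵥ ((Φ ^ k) *ᵥ θV0) := by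
    have h := map_sum (Matrix.mulVecLin HRV) (fun k => (Φ ^ k) *ᵥ θV0) (Finset.range K)
    simp only [Matrix.mulVecLin_apply] at h
    exact h
  have inner : (η • ∑ k ∈ Finset.range K, (Φ ^ k) *ᵥ θV0)
      = ∑ i, (η * (∑ k ∈ Finset.range K, (1 - η * lam i) ^ k) * (v i ⬝ᵥ θV0)) • v i := by
    simp only [hpow]
    rw [Finset.sum_comm, Finset.smul_sum]
    refine Finset.sum_congr rfl fun i _ => ?_
    rw [← Finset.sum_smul, smul_smul]
    congr 1
    simp only [Finset.mul_sum, Finset.sum_mul]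
    exact Finset.sum_congr rfl fun k _ => by ring
  have key : (η • ∑ k ∈ Finset.range K, HRV.mulVec ((Φ ^ k).mulVec θV0))
      = HRV.mulVec (∑ i, (η * (∑ k ∈ Finset.range K, (1 - η * lam i) ^ k)
          * (v i ⬝ᵥ θV0)) • v i) := by
    rw [← mulVec_sumK, ← Matrix.mulVec_smul, inner]
  rw [key]
  -- bound on components of θ in the basis
  have hdot : ∀ i, |v i ⬝ᵥ θV0| ≤ αbar := by
    intro i
    have hcs : (v i ⬝ᵥ θV0) ^ 2 ≤ (∑ j, v i j ^ 2) * ∑ j, θV0 j ^ 2 :=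
      Finset.sum_mul_sq_le_sq_mul_sq _ _ _
    have hv1 : (∑ j, v i j ^ 2) = 1 := by
      have h := hortho i i
      rw [if_pos rfl] at h
      rw [← h]
      simp [dotProduct, sq]
    have h0 : (0:ℝ) ≤ ∑ j, θV0 j ^ 2 := Finset.sum_nonneg fun _ _ => sq_nonneg _
    have hθ2 : (∑ j, θV0 j ^ 2) ≤ αbar ^ 2 := by
      have h1 : 0 ≤ euclNorm θV0 := Real.sqrt_nonneg _
      have h2 : (∑ j, θV0 j ^ 2) = euclNorm θV0 ^ 2 := by rw [euclNorm, Real.sq_sqrt h0]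
      nlinarith
    have hsq : (v i ⬝ᵥ θV0) ^ 2 ≤ αbar ^ 2 := by rw [hv1] at hcs; linarith
    calc |v i ⬝ᵥ θV0| = Real.sqrt ((v i ⬝ᵥ θV0) ^ 2) := (Real.sqrt_sq_eq_abs _).symm
      _ ≤ Real.sqrt (αbar ^ 2) := Real.sqrt_le_sqrt hsq
      _ = αbar := Real.sqrt_sq hαbar.le
  -- bound on the geometric coefficients
  have hcoef : ∀ i, |η * (∑ k ∈ Finset.range K, (1 - η * lam i) ^ k)| ≤ 1 / |lam i| := by
    intro i
    obtain ⟨hpos, hle⟩ := hetalam i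
    set μ : ℝ := 1 - η * lam i with hμ
    have hμ0 : 0 ≤ μ := by rw [hμ]; linarith
    have hg0 : 0 ≤ ∑ k ∈ Finset.range K, μ ^ k :=
      Finset.sum_nonneg fun k _ => pow_nonneg hμ0 k
    have hgeom : (∑ k ∈ Finset.range K, μ ^ k) * (η * lam i) = 1 - μ ^ K := by
      have hg := geom_sum_mul μ K
      have h1 : μ - 1 = -(η * lam i) := by rw [hμ]; ring
      rw [h1] at hg
      have : -((∑ k ∈ Finset.range K, μ ^ k) * (η * lam i)) = μ ^ K - 1 := by
        rw [← hg]; ring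
      linarith
    have hμK : 0 ≤ μ ^ K := pow_nonneg hμ0 K
    have hgle : (∑ k ∈ Finset.range K, μ ^ k) * (η * lam i) ≤ 1 := by
      rw [hgeom]; linarith
    have hlam0 : lam i ≠ 0 := by
      intro h; rw [h, mul_zero] at hpos; exact lt_irrefl _ hpos
    rw [abs_mul, abs_of_nonneg hg0, le_div_iff₀ (abs_pos.mpr hlam0)]
    have habs : |η| * |lam i| = η * lam i := by
      rw [← abs_mul]; exact abs_of_pos hpos
    calc |η| * (∑ k ∈ Finset.range K, μ ^ k) * |lam i|
        = (∑ k ∈ Finset.range K, μ ^ k) * (η * lam i) := by rw [← habs]; ring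
      _ ≤ 1 := hgle
  -- eigenvectors have unit norm
  have hvnorm : ∀ i, euclNorm (v i) = 1 := by
    intro i
    have h := hortho i i
    rw [if_pos rfl] at h
    have h2 : (∑ j, v i j ^ 2) = 1 := by rw [← h]; simp [dotProduct, sq]
    rw [euclNorm, h2, Real.sqrt_one]
  -- main estimate
  have hmain : euclNorm (∑ i, (η * (∑ k ∈ Finset.range K, (1 - η * lam i) ^ k)
      * (v i ⬝ᵥ θV0)) • v i) ≤ ∑ i, (1 / |lam i|) * αbar := by
    refine (euclNorm_sum_le _ _).trans ?_
    refine Finset.sum_le_sum fun i _ => ?_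
    rw [euclNorm_smul, hvnorm, mul_one, abs_mul]
    exact mul_le_mul (hcoef i) (hdot i) (abs_nonneg _)
      (div_nonneg zero_le_one (abs_nonneg _))
  have step : euclNorm (HRV.mulVec (∑ i, (η * (∑ k ∈ Finset.range K, (1 - η * lam i) ^ k)
      * (v i ⬝ᵥ θV0)) • v i)) ≤ hbar * ∑ i, (1 / |lam i|) * αbar :=
    (hHRV _).trans (mul_le_mul_of_nonneg_left hmain hhbar.le)
  refine step.trans ?_
  have hsum0 : (0:ℝ) ≤ ∑ i, 1 / |lam i| :=
    Finset.sum_nonneg fun i _ => div_nonneg zero_le_one (abs_nonneg _)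
  have heq : hbar * ∑ i, (1 / |lam i|) * αbar = hbar * αbar * ∑ i, 1 / |lam i| := by
    rw [← Finset.sum_mul]; ring
  rw [heq]
  rcases Nat.eq_zero_or_pos dV with h0 | hpos
  · subst h0; simp
  · have h1 : (1:ℝ) ≤ Real.sqrt dV := by
      rw [show (1:ℝ) = Real.sqrt 1 by simp]
      exact Real.sqrt_le_sqrt (by exact_mod_cast hpos)
    nlinarith [mul_nonneg (mul_nonneg hhbar.le hαbar.le) hsum0]
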